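/- Let ν > 0, c ∈ (3/2, 5/2], f_0 > 0. Then there exists a fixed point of the viscous dyadic model: a sequence α with Σ_{j=0}^∞ 2^{2js} α_j² < ∞ for every s ≥ 0 (in particular α ∈ l²(ℕ)) satisfying ν 2^{2j} α_j − 2^{c(j−1)} α_{j−1}² + 2^{cj} α_j α_{j+1} = f_j for all j ≥ 0 (with α_{−1} = 0). -/

import Mathlib

open Filter MeasureTheory intervalIntegral

/-- Right-hand side of the dyadic model ODE for the `j`-th component:
`d/dt a_j = f_j - ν 2^{2j} a_j + 2^{c(j-1)} a_{j-1}² - 2^{cj} a_j a_{j+1}`,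
with the conventions `a_{-1} = 0`, `f_0 = f₀`, `f_j = 0` for `j ≥ 1`. -/
noncomputable def dyadicRHS (ν c f₀ : ℝ) (a : ℕ → ℝ) (j : ℕ) : ℝ :=
  (if j = 0 then f₀ else 0) - ν * (2 : ℝ) ^ (2 * j) * a j
    + (if j = 0 then 0 else (2 : ℝ) ^ (c * ((j : ℝ) - 1)) * a (j - 1) ^ 2)
    - (2 : ℝ) ^ (c * (j : ℝ)) * a j * a (j + 1)

/-- A solution of the dyadic model on `[0, ∞)`: an `l²`-valued function whose
components are differentiable on `[0, ∞)` and satisfy the dyadic system. -/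
def IsSolution (ν c f₀ : ℝ) (a : ℝ → ℕ → ℝ) : Prop :=
  (∀ t : ℝ, 0 ≤ t → Summable (fun j : ℕ => a t j ^ 2)) ∧
  ∀ j : ℕ, ∀ t : ℝ, 0 ≤ t →
    HasDerivWithinAt (fun s : ℝ => a s j) (dyadicRHS ν c f₀ (a t) j) (Set.Ici 0) t

/-- A fixed point of the dyadic model: an `l²` sequence `α` with
`ν 2^{2j} α_j - 2^{c(j-1)} α_{j-1}² + 2^{cj} α_j α_{j+1} = f_j` for all `j ≥ 0`. -/
def IsFixedPoint (ν c f₀ : ℝ) (α : ℕ → ℝ) : Prop :=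
  (Summable fun j : ℕ => α j ^ 2) ∧
  ∀ j : ℕ, dyadicRHS ν c f₀ α j = 0

open Topology Finset

/-!
Galerkin fixed points are found by shooting: prescribing `a_N = t`, the equations
`N, N - 1, …, 1` determine `a_{N-1}, …, a_0 ≥ 0` one after the other as square roots, and the
intermediate value theorem tunes `t` so that equation `0` holds as well. Multiplying equation `j`
by `a_j` and summing, the fluxes telescope to the energy balance `∑ ν 4^j a_j² = f₀ a_0`, whence
`a_j ≤ (f₀/ν) 2^{-j}` uniformly in `N`; a pointwise limit of a subsequence (Tychonoff) is a fixed
point obeying the same bound. Inserting that bound into equation `j + 1` gives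
`α_{j+1} ≤ f₀/(4ν²) (2^c/8)^j α_j`, a superexponential decay as soon as `c < 3`.
-/

namespace Dyadic

variable {ν c f₀ : ℝ}

theorem dyadicRHS_zero (a : ℕ → ℝ) : dyadicRHS ν c f₀ a 0 = f₀ - ν * a 0 - a 0 * a 1 := by
  simp [dyadicRHS]

theorem dyadicRHS_succ (a : ℕ → ℝ) (j : ℕ) :
    dyadicRHS ν c f₀ a (j + 1) = (2 : ℝ) ^ (c * j) * a j ^ 2 - ν * 2 ^ (2 * (j + 1)) * a (j + 1)
      - (2 : ℝ) ^ (c * (j + 1)) * a (j + 1) * a (j + 2) := by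
  simp only [dyadicRHS, Nat.add_eq_zero_iff, one_ne_zero, and_false, ↓reduceIte, Nat.cast_add,
    Nat.cast_one, add_sub_cancel_right, add_tsub_cancel_right]
  ring

theorem continuous_dyadicRHS (j : ℕ) : Continuous fun a : ℕ → ℝ => dyadicRHS ν c f₀ a j := by
  cases j with
  | zero => simp_rw [dyadicRHS_zero]; fun_prop
  | succ j => simp_rw [dyadicRHS_succ]; fun_prop

/-- The nonnegative root `a_j` of equation `j + 1` when `a_{j+1} = u` and `a_{j+2} = v`. -/
noncomputable def backStep (ν c : ℝ) (j : ℕ) (u v : ℝ) : ℝ :=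
  √((ν * 2 ^ (2 * (j + 1)) * u + (2 : ℝ) ^ (c * (j + 1)) * u * v) / (2 : ℝ) ^ (c * j))

noncomputable def shoot (ν c : ℝ) (N : ℕ) (t : ℝ) (j : ℕ) : ℝ :=
  if j < N then backStep ν c j (shoot ν c N t (j + 1)) (shoot ν c N t (j + 2))
  else if j = N then t else 0
termination_by N - j

variable {N j : ℕ} {t : ℝ}

theorem shoot_of_lt (h : j < N) :
    shoot ν c N t j = backStep ν c j (shoot ν c N t (j + 1)) (shoot ν c N t (j + 2)) := by
  rw [shoot, if_pos h]

theorem shoot_self : shoot ν c N t N = t := by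
  rw [shoot, if_neg (lt_irrefl N), if_pos rfl]

theorem shoot_of_gt (h : N < j) : shoot ν c N t j = 0 := by
  rw [shoot, if_neg (by omega), if_neg (by omega)]

theorem shoot_nonneg (ht : 0 ≤ t) (j : ℕ) : 0 ≤ shoot ν c N t j := by
  rcases lt_trichotomy j N with h | rfl | h
  · rw [shoot_of_lt h]; exact Real.sqrt_nonneg _
  · rwa [shoot_self]
  · rw [shoot_of_gt h]

theorem shoot_zero (j : ℕ) : shoot ν c N 0 j = 0 := by
  rcases lt_trichotomy j N with h | rfl | h
  · rw [shoot_of_lt h, shoot_zero (j + 1), shoot_zero (j + 2)]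
    simp [backStep]
  · exact shoot_self
  · exact shoot_of_gt h
termination_by N - j

theorem continuous_shoot (j : ℕ) : Continuous fun t => shoot ν c N t j := by
  rcases lt_trichotomy j N with h | rfl | h
  · simp_rw [shoot_of_lt h, backStep]
    have := continuous_shoot (j + 1)
    have := continuous_shoot (j + 2)
    fun_prop
  · simp_rw [shoot_self]; exact continuous_id
  · simp_rw [shoot_of_gt h]; exact continuous_const
termination_by N - j

theorem tendsto_shoot_atTop (hν : 0 < ν) {j : ℕ} (hj : j ≤ N) :
    Tendsto (fun t => shoot ν c N t j) atTop atTop := by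
  rcases hj.lt_or_eq with h | rfl
  · have hC : 0 < ν * 2 ^ (2 * (j + 1)) / (2 : ℝ) ^ (c * j) := by positivity
    have hnext := tendsto_shoot_atTop (j := j + 1) hν h
    refine tendsto_atTop_mono' _ ?_ (Real.tendsto_sqrt_atTop.comp (hnext.const_mul_atTop hC))
    filter_upwards [eventually_ge_atTop 0] with t ht
    have hu := shoot_nonneg (ν := ν) (c := c) (N := N) ht (j + 1)
    have hv := shoot_nonneg (ν := ν) (c := c) (N := N) ht (j + 2)
    rw [shoot_of_lt h, backStep, Function.comp_apply, div_mul_eq_mul_div]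
    gcongr
    exact le_add_of_nonneg_right (by positivity)
  · simp_rw [shoot_self]; exact tendsto_id
termination_by N - j

theorem dyadicRHS_shoot_succ (hν : 0 ≤ ν) (ht : 0 ≤ t) (h : j < N) :
    dyadicRHS ν c f₀ (shoot ν c N t) (j + 1) = 0 := by
  have hu := shoot_nonneg (ν := ν) (c := c) (N := N) ht (j + 1)
  have hv := shoot_nonneg (ν := ν) (c := c) (N := N) ht (j + 2)
  have hsq : shoot ν c N t j ^ 2 = (ν * 2 ^ (2 * (j + 1)) * shoot ν c N t (j + 1)
      + (2 : ℝ) ^ (c * (j + 1)) * shoot ν c N t (j + 1) * shoot ν c N t (j + 2))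
        / (2 : ℝ) ^ (c * j) := by
    rw [shoot_of_lt h, backStep, Real.sq_sqrt (by positivity)]
  rw [dyadicRHS_succ, hsq]
  field_simp
  ring

structure IsGalerkinFixedPoint (ν c f₀ : ℝ) (N : ℕ) (a : ℕ → ℝ) : Prop where
  rhs_eq_zero : ∀ j ≤ N, dyadicRHS ν c f₀ a j = 0
  eq_zero_of_lt : ∀ j, N < j → a j = 0

theorem exists_nonneg_isGalerkinFixedPoint (hν : 0 < ν) (hf : 0 ≤ f₀) (N : ℕ) :
    ∃ a : ℕ → ℝ, (∀ j, 0 ≤ a j) ∧ IsGalerkinFixedPoint ν c f₀ N a := by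
  set g : ℝ → ℝ := fun t => dyadicRHS ν c f₀ (shoot ν c N t) 0
  have hg : Continuous g := (continuous_dyadicRHS 0).comp (continuous_pi continuous_shoot)
  have hg0 : g 0 = f₀ := by simp [g, dyadicRHS_zero, shoot_zero]
  obtain ⟨T, hT, hT0⟩ : ∃ T, g T ≤ 0 ∧ 0 ≤ T := by
    have hlarge := (tendsto_shoot_atTop (c := c) hν (Nat.zero_le N)).eventually_ge_atTop (f₀ / ν)
    obtain ⟨T, hT, hT0⟩ := (hlarge.and (eventually_ge_atTop 0)).exists
    have h0 := shoot_nonneg (ν := ν) (c := c) (N := N) hT0 0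
    have h1 := shoot_nonneg (ν := ν) (c := c) (N := N) hT0 1
    rw [div_le_iff₀ hν] at hT
    refine ⟨T, ?_, hT0⟩
    simp only [g, dyadicRHS_zero]
    nlinarith
  obtain ⟨t, ⟨ht, -⟩, hgt⟩ := intermediate_value_Icc' hT0 hg.continuousOn ⟨hT, hg0 ▸ hf⟩
  refine ⟨shoot ν c N t, shoot_nonneg ht, ⟨fun j hj => ?_, fun j hj => shoot_of_gt hj⟩⟩
  cases j with
  | zero => exact hgt
  | succ j => exact dyadicRHS_shoot_succ hν.le ht (by omega)

theorem sum_dissipation_eq_sub_flux {a : ℕ → ℝ} {n : ℕ}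
    (h : ∀ j ≤ n, dyadicRHS ν c f₀ a j = 0) :
    ∑ j ∈ range (n + 1), ν * 2 ^ (2 * j) * a j ^ 2
      = f₀ * a 0 - (2 : ℝ) ^ (c * n) * a n ^ 2 * a (n + 1) := by
  induction n with
  | zero =>
    have h0 := h 0 le_rfl
    rw [dyadicRHS_zero] at h0
    simp only [zero_add, sum_range_one, mul_zero, pow_zero, CharP.cast_eq_zero, Real.rpow_zero]
    linear_combination (-a 0) * h0
  | succ n ih =>
    have hn := h (n + 1) le_rfl
    rw [dyadicRHS_succ] at hn
    rw [sum_range_succ, ih fun j hj => h j (by omega)]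
    push_cast
    linear_combination (-a (n + 1)) * hn

theorem IsGalerkinFixedPoint.le_div_two_pow {N : ℕ} {a : ℕ → ℝ}
    (h : IsGalerkinFixedPoint ν c f₀ N a) (ha : ∀ j, 0 ≤ a j) (hν : 0 < ν) (hf : 0 ≤ f₀)
    (j : ℕ) : a j ≤ f₀ / ν / 2 ^ j := by
  rcases lt_or_ge N j with hj | hj
  · rw [h.eq_zero_of_lt j hj]; positivity
  have henergy := sum_dissipation_eq_sub_flux h.rhs_eq_zero
  rw [h.eq_zero_of_lt (N + 1) (lt_add_one N), mul_zero, sub_zero] at henergy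
  have hterm : ∀ i ≤ N, ν * 2 ^ (2 * i) * a i ^ 2 ≤ f₀ * a 0 := fun i hi =>
    henergy ▸ single_le_sum (f := fun k => ν * 2 ^ (2 * k) * a k ^ 2) (fun k _ => by positivity)
      (mem_range.2 (by omega))
  have h0 : ν * a 0 ≤ f₀ := by
    have := hterm 0 (Nat.zero_le N)
    simp only [mul_zero, pow_zero] at this
    rcases (ha 0).eq_or_lt with h0 | h0
    · rw [← h0, mul_zero]; exact hf
    · nlinarith
  have hsq : (a j * 2 ^ j) ^ 2 ≤ (f₀ / ν) ^ 2 := by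
    have := hterm j hj
    rw [mul_pow, ← pow_mul, Nat.mul_comm j 2, div_pow, le_div_iff₀ (by positivity)]
    nlinarith [mul_le_mul_of_nonneg_left h0 hf]
  rw [le_div_iff₀ (by positivity)]
  exact (pow_le_pow_iff_left₀ (by positivity [ha j]) (by positivity) two_ne_zero).1 hsq

theorem exists_nonneg_fixedPoint_le (hν : 0 < ν) (hf : 0 ≤ f₀) :
    ∃ α : ℕ → ℝ, (∀ j, 0 ≤ α j) ∧ (∀ j, α j ≤ f₀ / ν / 2 ^ j) ∧
      ∀ j, dyadicRHS ν c f₀ α j = 0 := by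
  choose A hA0 hA using exists_nonneg_isGalerkinFixedPoint (c := c) hν hf
  have hbox : ∀ N, A N ∈ Set.univ.pi fun j => Set.Icc 0 (f₀ / ν / 2 ^ j) := fun N j _ =>
    ⟨hA0 N j, (hA N).le_div_two_pow (hA0 N) hν hf j⟩
  obtain ⟨α, hα, φ, hφ, hlim⟩ := (isCompact_univ_pi fun j => isCompact_Icc).tendsto_subseq hbox
  refine ⟨α, fun j => (hα j trivial).1, fun j => (hα j trivial).2, fun j => ?_⟩
  refine tendsto_nhds_unique (((continuous_dyadicRHS j).tendsto α).comp hlim)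
    (tendsto_const_nhds.congr' ?_)
  filter_upwards [eventually_ge_atTop j] with n hn
  exact ((hA (φ n)).rhs_eq_zero j (hn.trans hφ.le_apply)).symm

theorem le_mul_of_rhs_eq_zero {α : ℕ → ℝ} {K : ℝ} (hν : 0 < ν) (hα : ∀ j, 0 ≤ α j)
    (hK : ∀ j, α j ≤ K / 2 ^ j) (heq : ∀ j, dyadicRHS ν c f₀ α j = 0) (j : ℕ) :
    α (j + 1) ≤ K / (4 * ν) * ((2 : ℝ) ^ c / 8) ^ j * α j := by
  have h := heq (j + 1)
  rw [dyadicRHS_succ] at h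
  have hflux : 0 ≤ (2 : ℝ) ^ (c * (j + 1)) * α (j + 1) * α (j + 2) := by
    have := hα (j + 1); have := hα (j + 2); positivity
  have hpow : (2 : ℝ) ^ (c * j) = ((2 : ℝ) ^ c) ^ j := by
    rw [Real.rpow_mul zero_le_two, Real.rpow_natCast]
  have hsq : α j ^ 2 ≤ α j * (K / 2 ^ j) := by
    rw [sq]; exact mul_le_mul_of_nonneg_left (hK j) (hα j)
  have h4 : (2 : ℝ) ^ (2 * (j + 1)) = 4 * 4 ^ j := by
    rw [pow_mul]; norm_num; ring
  have h8 : (8 : ℝ) ^ j = 2 ^ j * 4 ^ j := by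
    rw [← mul_pow]; norm_num
  calc α (j + 1) = ((2 : ℝ) ^ (c * j) * α j ^ 2
        - (2 : ℝ) ^ (c * (j + 1)) * α (j + 1) * α (j + 2)) / (ν * 2 ^ (2 * (j + 1))) := by
        field_simp; linarith
    _ ≤ ((2 : ℝ) ^ c) ^ j * (α j * (K / 2 ^ j)) / (ν * 2 ^ (2 * (j + 1))) := by
        rw [← hpow]
        gcongr
        linarith [mul_le_mul_of_nonneg_left hsq (by positivity : (0 : ℝ) ≤ 2 ^ (c * j))]
    _ = K / (4 * ν) * ((2 : ℝ) ^ c / 8) ^ j * α j := by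
        rw [h4, div_pow, h8]; field_simp

theorem summable_two_rpow_mul_sq_of_le_mul {α ρ : ℕ → ℝ} (hα : ∀ j, 0 ≤ α j)
    (hρ : Tendsto ρ atTop (𝓝 0)) (hstep : ∀ j, α (j + 1) ≤ ρ j * α j) (s : ℝ) :
    Summable fun j : ℕ => (2 : ℝ) ^ (2 * (j : ℝ) * s) * α j ^ 2 := by
  have hsmall : ∀ᶠ j in atTop, (2 : ℝ) ^ (2 * s) * ρ j ^ 2 ≤ 1 / 2 := by
    have : Tendsto (fun j => (2 : ℝ) ^ (2 * s) * ρ j ^ 2) atTop (𝓝 0) := by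
      simpa using (hρ.pow 2).const_mul ((2 : ℝ) ^ (2 * s))
    exact this.eventually (eventually_le_nhds (by norm_num))
  refine summable_of_ratio_norm_eventually_le (by norm_num : (1 / 2 : ℝ) < 1) ?_
  filter_upwards [hsmall] with j hj
  rw [Real.norm_of_nonneg (by positivity), Real.norm_of_nonneg (by positivity)]
  have hsq : α (j + 1) ^ 2 ≤ ρ j ^ 2 * α j ^ 2 := by
    rw [← mul_pow]; exact pow_le_pow_left₀ (hα _) (hstep j) 2
  calc (2 : ℝ) ^ (2 * ((j + 1 : ℕ) : ℝ) * s) * α (j + 1) ^ 2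
      = (2 : ℝ) ^ (2 * s) * (2 : ℝ) ^ (2 * (j : ℝ) * s) * α (j + 1) ^ 2 := by
        rw [← Real.rpow_add two_pos]; push_cast; ring_nf
    _ ≤ (2 : ℝ) ^ (2 * s) * (2 : ℝ) ^ (2 * (j : ℝ) * s) * (ρ j ^ 2 * α j ^ 2) := by gcongr
    _ = ((2 : ℝ) ^ (2 * s) * ρ j ^ 2) * ((2 : ℝ) ^ (2 * (j : ℝ) * s) * α j ^ 2) := by ring
    _ ≤ 1 / 2 * ((2 : ℝ) ^ (2 * (j : ℝ) * s) * α j ^ 2) := by gcongr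

end Dyadic

open Dyadic

theorem stmt_19 (ν c f₀ : ℝ) (hν : 0 < ν)
    (hc : c ∈ Set.Ioc (3 / 2 : ℝ) (5 / 2)) (hf : 0 < f₀) :
    ∃ α : ℕ → ℝ, IsFixedPoint ν c f₀ α ∧
      ∀ s : ℝ, 0 ≤ s → Summable (fun j : ℕ => (2 : ℝ) ^ (2 * (j : ℝ) * s) * α j ^ 2) := by
  obtain ⟨α, hα0, hαle, hαeq⟩ := exists_nonneg_fixedPoint_le (c := c) hν hf.le
  have hq : (2 : ℝ) ^ c / 8 < 1 := by
    rw [div_lt_one (by norm_num)]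
    calc (2 : ℝ) ^ c < 2 ^ (3 : ℝ) :=
          Real.rpow_lt_rpow_of_exponent_lt one_lt_two (by linarith [hc.2])
      _ = 8 := by norm_num
  have hρ : Tendsto (fun j => f₀ / ν / (4 * ν) * ((2 : ℝ) ^ c / 8) ^ j) atTop (𝓝 0) := by
    simpa using (tendsto_pow_atTop_nhds_zero_of_lt_one (by positivity) hq).const_mul
      (f₀ / ν / (4 * ν))
  have hsob := summable_two_rpow_mul_sq_of_le_mul hα0 hρ (le_mul_of_rhs_eq_zero hν hα0 hαle hαeq)
  exact ⟨α, ⟨by simpa using hsob 0, hαeq⟩, fun s _ => hsob s⟩
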